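/- Let F, V, Φ be as in a gradient-like system (V a C¹ strict Lyapunov function for the C¹ vector field F), and let X be a bounded asymptotic pseudotrajectory of Φ whose limit set L(X) ∩ Eq(F) is countable and such that V(L(X) ∩ Eq(F)) has empty interior. Then X(t) converges as t → ∞ to a single equilibrium point of F. -/

import Mathlib

open Set Filter Topology MeasureTheory Asymptotics

noncomputable section

/-- `φ` is the flow induced by the (globally integrable) vector field `F`. -/
def IsFlowOf {E : Type*} [NormedAddCommGroup E] [NormedSpace ℝ E]
    (F : E → E) (φ : ℝ → E → E) : Prop :=
  (∀ x, φ 0 x = x) ∧ (∀ s t x, φ (s + t) x = φ s (φ t x)) ∧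
    (∀ x t, HasDerivAt (fun τ => φ τ x) (F (φ t x)) t)

/-- `X` is an asymptotic pseudotrajectory of the flow `φ`. -/
def IsAPT {E : Type*} [NormedAddCommGroup E] [NormedSpace ℝ E]
    (φ : ℝ → E → E) (X : ℝ → E) : Prop :=
  ∀ T > (0:ℝ), ∀ ε > (0:ℝ), ∃ t₀ : ℝ, ∀ t ≥ t₀, ∀ h ∈ Icc (0:ℝ) T,
    ‖X (t + h) - φ h (X t)‖ ≤ ε

/-- The limit set of a curve `X`. -/
def limitSet {E : Type*} [NormedAddCommGroup E] (X : ℝ → E) : Set E :=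
  ⋂ t : ℝ, closure (X '' Ici t)

/-! The limit set `L` of a bounded continuous curve is nonempty, compact and connected, and for
an asymptotic pseudotrajectory it is invariant under the flow. The Lyapunov function `V` is
constant on `L`: otherwise choose a level `c` strictly between two values of `V` on `L` that is
not the value of an equilibrium in `L`. Then `V ∘ X` crosses `c` upwards at arbitrarily late
times; near such crossings `X` is close to a point `z ∈ L` with `V z = c`, which is not an
equilibrium, so its orbit drops below `c` within unit time, and the pseudotrajectory follows it.
Since `V` is nonincreasing along all orbits, `V ∘ X` cannot climb far above `c` within that unit
time either, contradicting the crossing. Invariance then forces `L` to consist of equilibria, so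
`L` is countable, and a countable connected set is a single point. -/

open Metric Real
open scoped NNReal

theorem isPreconnected_iInter_of_directed {X ι : Type*} [TopologicalSpace X] [T2Space X]
    [Nonempty ι] {K : ι → Set X} (hd : Directed (· ⊇ ·) K) (hc : ∀ i, IsCompact (K i))
    (hK : ∀ i, IsPreconnected (K i)) : IsPreconnected (⋂ i, K i) := by
  obtain ⟨i₀⟩ := ‹Nonempty ι›
  have hcpt : IsCompact (⋂ i, K i) :=
    (hc i₀).of_isClosed_subset (isClosed_iInter fun i => (hc i).isClosed) (iInter_subset _ i₀)
  rw [isPreconnected_iff_subset_of_fully_disjoint_closed hcpt.isClosed]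
  intro u v hu hv huv hdisj
  obtain ⟨U, W, hU, hW, huU, hvW, hUW⟩ := SeparatedNhds.of_isCompact_isCompact
    (hcpt.inter_right hu) (hcpt.inter_right hv) (hdisj.mono inter_subset_right inter_subset_right)
  have hcover : ∀ x ∈ ⋂ i, K i, x ∈ U ∪ W := fun x hx =>
    (huv hx).imp (fun h => huU ⟨hx, h⟩) (fun h => hvW ⟨hx, h⟩)
  obtain ⟨i, hi⟩ := exists_subset_nhds_of_isCompact hd hc
    fun x hx => (hU.union hW).mem_nhds (hcover x hx)
  have hiUW : K i ∩ (U ∩ W) = ∅ := by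
    rw [hUW.inter_eq, inter_empty]
  rcases isPreconnected_iff_subset_of_disjoint.1 (hK i) U W hU hW hi hiUW with hiU | hiW
  · refine Or.inl fun x hx => (huv hx).resolve_right fun hxv => ?_
    exact hUW.le_bot ⟨hiU (iInter_subset K i hx), hvW ⟨hx, hxv⟩⟩
  · refine Or.inr fun x hx => (huv hx).resolve_left fun hxu => ?_
    exact hUW.le_bot ⟨huU ⟨hx, hxu⟩, hiW (iInter_subset K i hx)⟩

theorem exists_last_crossing {v : ℝ → ℝ} (hv : Continuous v) {a b c : ℝ} (hab : a ≤ b)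
    (ha : v a ≤ c) (hb : c < v b) : ∃ s ∈ Ico a b, v s = c ∧ ∀ t ∈ Ioc s b, c < v t := by
  obtain ⟨s, ⟨hs, hsc⟩, hmax⟩ := (isCompact_Icc.inter_right
    (isClosed_le hv continuous_const)).exists_isGreatest ⟨a, ⟨le_rfl, hab⟩, ha⟩
  have hafter : ∀ t ∈ Ioc s b, c < v t := fun t ht =>
    lt_of_not_ge fun htc => (hmax ⟨⟨hs.1.trans ht.1.le, ht.2⟩, htc⟩).not_gt ht.1
  have hsb : s < b := hs.2.lt_of_ne fun hsb => (hsb ▸ hsc).not_gt hb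
  refine ⟨s, ⟨hs.1, hsb⟩, le_antisymm hsc (not_lt.1 fun hlt => ?_), hafter⟩
  obtain ⟨t, ht, htc⟩ := intermediate_value_Icc hs.2 hv.continuousOn ⟨hlt.le, hb.le⟩
  have hst : s < t := ht.1.lt_of_ne fun hst => hlt.ne (hst ▸ htc)
  exact (hafter t ⟨hst, ht.2⟩).ne' htc

theorem exists_upcrossing {v : ℝ → ℝ} (hv : Continuous v) {b c : ℝ} (hcb : c ≤ b)
    (hlow : ∃ᶠ t in atTop, v t < c) (hhigh : ∃ᶠ t in atTop, b < v t) (T : ℝ) :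
    ∃ s ≥ T, ∃ u, v s = c ∧ s < u ∧ b < v u ∧ ∀ t ∈ Ioc s u, c < v t := by
  obtain ⟨t₁, ht₁, hv₁⟩ := frequently_atTop.1 hlow T
  obtain ⟨u, hu, hvu⟩ := frequently_atTop.1 hhigh t₁
  obtain ⟨s, hs, hvs, hafter⟩ := exists_last_crossing hv hu hv₁.le (hcb.trans_lt hvu)
  exact ⟨s, ht₁.trans hs.1, u, hvs, hs.2, hvu, hafter⟩

section LimitSet

variable {E : Type*} [NormedAddCommGroup E] {X : ℝ → E}

theorem mem_limitSet_iff {p : E} : p ∈ limitSet X ↔ MapClusterPt p atTop X := by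
  rw [MapClusterPt, (atTop_basis.map X).clusterPt_iff_forall_mem_closure]
  simp [limitSet]

variable [ProperSpace E] {C : ℝ}

theorem isCompact_closure_image (hXb : ∀ t, ‖X t‖ ≤ C) (s : Set ℝ) :
    IsCompact (closure (X '' s)) :=
  (isBounded_iff_forall_norm_le.2 ⟨C, forall_mem_image.2 fun t _ => hXb t⟩).isCompact_closure

theorem limitSet_nonempty (hXb : ∀ t, ‖X t‖ ≤ C) : (limitSet X).Nonempty := by
  obtain ⟨p, -, hp⟩ := (isCompact_closure_image hXb univ).exists_mapClusterPt (f := atTop)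
    (tendsto_principal.2 (Eventually.of_forall fun t =>
      subset_closure (mem_image_of_mem X (mem_univ t))))
  exact ⟨p, mem_limitSet_iff.2 hp⟩

theorem isPreconnected_limitSet (hXc : Continuous X) (hXb : ∀ t, ‖X t‖ ≤ C) :
    IsPreconnected (limitSet X) :=
  isPreconnected_iInter_of_directed
    (Antitone.directed_ge fun _ _ hst => closure_mono (image_mono (Ici_subset_Ici.2 hst)))
    (fun _ => isCompact_closure_image hXb _)
    (fun _ => (isPreconnected_Ici.image X hXc.continuousOn).closure)

theorem tendsto_of_limitSet_subset_singleton (hXb : ∀ t, ‖X t‖ ≤ C) {p : E}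
    (hp : limitSet X ⊆ {p}) : Tendsto X atTop (𝓝 p) :=
  (isCompact_closure_image hXb univ).tendsto_nhds_of_unique_mapClusterPt
    (Eventually.of_forall fun t => subset_closure (mem_image_of_mem X (mem_univ t)))
    fun _ _ hx => hp (mem_limitSet_iff.2 hx)

end LimitSet

section Flow

variable {E : Type*} [NormedAddCommGroup E] [NormedSpace ℝ E] {F : E → E} {φ : ℝ → E → E}

theorem IsFlowOf.continuous_orbit (hφ : IsFlowOf F φ) (x : E) : Continuous (φ · x) :=
  continuous_iff_continuousAt.2 fun t => (hφ.2.2 x t).continuousAt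

theorem IsFlowOf.dist_apply_le (hφ : IsFlowOf F φ) {s : Set E} {K : ℝ≥0}
    (hK : LipschitzOnWith K F s) {x y : E} {b : ℝ} (hb : 0 ≤ b)
    (hx : ∀ τ ∈ Ico 0 b, φ τ x ∈ s) (hy : ∀ τ ∈ Ico 0 b, φ τ y ∈ s) :
    dist (φ b y) (φ b x) ≤ dist y x * exp (K * b) := by
  have := dist_le_of_trajectories_ODE_of_mem (v := fun _ => F) (s := fun _ => s)
    (fun _ _ => hK) (hφ.continuous_orbit y).continuousOn
    (fun τ _ => (hφ.2.2 y τ).hasDerivWithinAt) hy (hφ.continuous_orbit x).continuousOn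
    (fun τ _ => (hφ.2.2 x τ).hasDerivWithinAt) hx (by rw [hφ.1, hφ.1]) b ⟨hb, le_rfl⟩
  rwa [sub_zero] at this

variable [ProperSpace E]

theorem IsFlowOf.apply_eq_self_of_eq_zero (hF : ContDiff ℝ 1 F) (hφ : IsFlowOf F φ) {x : E}
    (hx : F x = 0) {t : ℝ} (ht : 0 ≤ t) : φ t x = x := by
  obtain ⟨R, hR⟩ := (isCompact_Icc.image (hφ.continuous_orbit x)).isBounded.subset_closedBall
    (0 : E)
  obtain ⟨K, hK⟩ := hF.locallyLipschitz.locallyLipschitzOn.exists_lipschitzOnWith_of_compact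
    (isCompact_closedBall (0 : E) R)
  have hxR : x ∈ closedBall (0 : E) R := hR ⟨0, ⟨le_rfl, ht⟩, hφ.1 x⟩
  exact ODE_solution_unique_of_mem_Icc_right (v := fun _ => F) (fun _ _ => hK)
    (hφ.continuous_orbit x).continuousOn (fun τ _ => (hφ.2.2 x τ).hasDerivWithinAt)
    (fun τ hτ => hR (mem_image_of_mem _ (Ico_subset_Icc_self hτ))) continuousOn_const
    (fun τ _ => by simpa [hx] using hasDerivWithinAt_const τ (Ici τ) x) (fun _ _ => hxR)
    (hφ.1 x) ⟨ht, le_rfl⟩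

theorem IsFlowOf.continuous_apply (hF : ContDiff ℝ 1 F) (hφ : IsFlowOf F φ) {T : ℝ}
    (hT : 0 ≤ T) : Continuous (φ T) := by
  refine continuous_iff_continuousAt.2 fun x => Metric.continuousAt_iff.2 fun η hη => ?_
  obtain ⟨R, hR⟩ := (isCompact_Icc.image (hφ.continuous_orbit x)).isBounded.subset_closedBall
    (0 : E)
  have horbit : ∀ τ ∈ Icc 0 T, ‖φ τ x‖ ≤ R := fun τ hτ =>
    mem_closedBall_zero_iff.1 (hR (mem_image_of_mem _ hτ))
  obtain ⟨K, hK⟩ := hF.locallyLipschitz.locallyLipschitzOn.exists_lipschitzOnWith_of_compact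
    (isCompact_closedBall (0 : E) (R + 1))
  set r := min η 1
  refine ⟨r / 2 * exp (-(K * T)), by positivity, fun {y} hy => ?_⟩
  -- Gronwall applies as long as the orbit of `y` stays within distance `1` of that of `x`.
  have hgronwall : ∀ b ∈ Icc 0 T, (∀ τ ∈ Ico 0 b, dist (φ τ y) (φ τ x) < 1) →
      dist (φ b y) (φ b x) < r := by
    intro b hb hnear
    have hxb : ∀ τ ∈ Ico 0 b, φ τ x ∈ closedBall (0 : E) (R + 1) := fun τ hτ =>
      mem_closedBall_zero_iff.2 (by linarith [horbit τ ⟨hτ.1, hτ.2.le.trans hb.2⟩])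
    have hyb : ∀ τ ∈ Ico 0 b, φ τ y ∈ closedBall (0 : E) (R + 1) := fun τ hτ => by
      have := dist_triangle (φ τ y) (φ τ x) 0
      rw [dist_zero_right, dist_zero_right] at this
      rw [mem_closedBall_zero_iff]
      linarith [hnear τ hτ, horbit τ ⟨hτ.1, hτ.2.le.trans hb.2⟩]
    calc dist (φ b y) (φ b x) ≤ dist y x * exp (K * b) := hφ.dist_apply_le hK hb.1 hxb hyb
      _ ≤ r / 2 * exp (-(K * T)) * exp (K * b) := by gcongr
      _ ≤ r / 2 := by
        rw [mul_assoc, ← exp_add]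
        refine mul_le_of_le_one_right (by positivity) (exp_le_one_iff.2 ?_)
        nlinarith [hb.2, K.coe_nonneg]
      _ < r := half_lt_self (by positivity)
  have hnear : ∀ τ ∈ Icc 0 T, dist (φ τ y) (φ τ x) < 1 := by
    by_contra! hfar
    obtain ⟨b, ⟨hb, hb1⟩, hfirst⟩ := (isCompact_Icc.inter_right (isClosed_le continuous_const
      ((hφ.continuous_orbit y).dist (hφ.continuous_orbit x)))).exists_isLeast hfar
    refine (hgronwall b hb fun τ hτ => lt_of_not_ge fun h => ?_).not_ge (hb1.trans' ?_)
    · exact (hfirst ⟨⟨hτ.1, hτ.2.le.trans hb.2⟩, h⟩).not_gt hτ.2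
    · exact min_le_right _ _
  exact (hgronwall T ⟨hT, le_rfl⟩ fun τ hτ => hnear τ (Ico_subset_Icc_self hτ)).trans_le
    (min_le_left _ _)

theorem IsFlowOf.apply_le_of_lyapunov (hF : ContDiff ℝ 1 F) (hφ : IsFlowOf F φ) {V : E → ℝ}
    (hLyap : ∀ x, F x ≠ 0 → ∀ t > (0:ℝ), V (φ t x) < V x) (x : E) {t : ℝ} (ht : 0 ≤ t) :
    V (φ t x) ≤ V x := by
  by_cases hx : F x = 0
  · rw [hφ.apply_eq_self_of_eq_zero hF hx ht]
  rcases ht.eq_or_lt with rfl | ht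
  · rw [hφ.1]
  · exact (hLyap x hx t ht).le

end Flow

section APT

variable {E : Type*} [NormedAddCommGroup E] [NormedSpace ℝ E] {φ : ℝ → E → E} {X : ℝ → E}

theorem IsAPT.tendsto_sub (hX : IsAPT φ X) {h : ℝ} (hh : 0 ≤ h) :
    Tendsto (fun t => X (t + h) - φ h (X t)) atTop (𝓝 0) := by
  refine Metric.tendsto_nhds.2 fun ε hε => ?_
  obtain ⟨t₀, ht₀⟩ := hX (h + 1) (by linarith) (ε / 2) (half_pos hε)
  filter_upwards [eventually_ge_atTop t₀] with t ht
  rw [dist_zero_right]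
  exact (ht₀ t ht h ⟨hh, by linarith⟩).trans_lt (half_lt_self hε)

theorem IsAPT.tendsto_comp_add (hX : IsAPT φ X) {h : ℝ} (hh : 0 ≤ h) (hφh : Continuous (φ h))
    {ι : Type*} {l : Filter ι} {s : ι → ℝ} (hs : Tendsto s l atTop) {q : E}
    (hq : Tendsto (fun i => X (s i)) l (𝓝 q)) :
    Tendsto (fun i => X (s i + h)) l (𝓝 (φ h q)) := by
  simpa using ((hX.tendsto_sub hh).comp hs).add ((hφh.tendsto q).comp hq)

theorem IsAPT.mapsTo_limitSet (hX : IsAPT φ X) {h : ℝ} (hh : 0 ≤ h) (hφh : Continuous (φ h)) :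
    MapsTo (φ h) (limitSet X) (limitSet X) := by
  intro p hp
  rw [mem_limitSet_iff, mapClusterPt_iff_ultrafilter] at hp ⊢
  obtain ⟨U, hU, hXU⟩ := hp
  have hUtop : Tendsto id (U : Filter ℝ) atTop := hU
  refine ⟨U.map (· + h), (tendsto_atTop_add_const_right _ h hUtop : _), ?_⟩
  rw [Ultrafilter.coe_map, tendsto_map'_iff]
  exact hX.tendsto_comp_add hh hφh hUtop hXU

theorem IsAPT.eventually_lt_add [ProperSpace E] (hX : IsAPT φ X) {C : ℝ}
    (hXb : ∀ t, ‖X t‖ ≤ C) {V : E → ℝ} (hV : Continuous V) {η : ℝ} (hη : 0 < η) :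
    ∀ᶠ t in atTop, ∀ h ∈ Icc (0:ℝ) 1, V (X (t + h)) < V (φ h (X t)) + η := by
  obtain ⟨δ, hδ, hVδ⟩ := Metric.uniformContinuousOn_iff.1
    ((isCompact_closedBall (0 : E) (C + 1)).uniformContinuousOn_of_continuous hV.continuousOn)
    η hη
  obtain ⟨t₀, ht₀⟩ := hX 1 one_pos (min (δ / 2) 1) (by positivity)
  filter_upwards [eventually_ge_atTop t₀] with t ht h hh
  have hclose := ht₀ t ht h hh
  have hXmem : X (t + h) ∈ closedBall (0 : E) (C + 1) :=
    mem_closedBall_zero_iff.2 (by linarith [hXb (t + h)])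
  have hφmem : φ h (X t) ∈ closedBall (0 : E) (C + 1) := by
    have := norm_le_norm_add_norm_sub' (φ h (X t)) (X (t + h))
    rw [norm_sub_rev] at this
    exact mem_closedBall_zero_iff.2 (by linarith [hXb (t + h), min_le_right (δ / 2) 1])
  have hdist : dist (X (t + h)) (φ h (X t)) < δ := by
    rw [dist_eq_norm]
    linarith [min_le_left (δ / 2) 1]
  linarith [(abs_lt.1 (Real.dist_eq _ _ ▸ hVδ _ hXmem _ hφmem hdist)).2]

end APT

theorem IsAPT.lyapunov_le_of_mem_limitSet {E : Type*} [NormedAddCommGroup E] [NormedSpace ℝ E]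
    [ProperSpace E] {F : E → E} {φ : ℝ → E → E} {V : E → ℝ} {X : ℝ → E} {C : ℝ}
    (hF : ContDiff ℝ 1 F) (hφ : IsFlowOf F φ) (hV : Continuous V)
    (hLyap : ∀ x, F x ≠ 0 → ∀ t > (0:ℝ), V (φ t x) < V x)
    (hX : IsAPT φ X) (hXc : Continuous X) (hXb : ∀ t, ‖X t‖ ≤ C)
    (hint : interior (V '' (limitSet X ∩ {x | F x = 0})) = ∅)
    {p q : E} (hp : p ∈ limitSet X) (hq : q ∈ limitSet X) : V p ≤ V q := by
  by_contra! hqp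
  obtain ⟨c, ⟨hqc, hcp⟩, hc⟩ : ∃ c ∈ Ioo (V q) (V p),
      c ∉ V '' (limitSet X ∩ {x | F x = 0}) :=
    not_subset.1 fun hsub => (nonempty_Ioo.2 hqp).ne_empty <|
      subset_empty_iff.1 <| hint ▸ interior_maximal hsub isOpen_Ioo
  obtain ⟨b, hcb, hbp⟩ := exists_between hcp
  have hfrequently : ∀ z ∈ limitSet X, ∀ {P : ℝ → Prop}, (∀ᶠ y in 𝓝 (V z), P y) →
      ∃ᶠ t in atTop, P (V (X t)) := fun z hz _ hP =>
    ((mem_limitSet_iff.1 hz).continuousAt_comp hV.continuousAt).frequently hP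
  choose s hsn u hvs hsu hvu hafter using fun n : ℕ =>
    exists_upcrossing (hV.comp hXc) hcb.le (hfrequently q hq (eventually_lt_nhds hqc))
      (hfrequently p hp (eventually_gt_nhds hbp)) n
  obtain ⟨z, -, ψ, hψ, hXz⟩ := (isCompact_closedBall (0 : E) C).tendsto_subseq
    (x := fun n => X (s n)) fun n => mem_closedBall_zero_iff.2 (hXb _)
  have hs : Tendsto (fun n => s (ψ n)) atTop atTop :=
    tendsto_atTop_mono (fun n => hsn (ψ n)) (tendsto_natCast_atTop_atTop.comp hψ.tendsto_atTop)
  have hzL : z ∈ limitSet X := mem_limitSet_iff.2 (hXz.mapClusterPt.of_comp hs)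
  have hVz : V z = c := tendsto_nhds_unique ((hV.tendsto z).comp hXz)
    (tendsto_const_nhds.congr fun n => (hvs (ψ n)).symm)
  have hFz : F z ≠ 0 := fun h => hc ⟨z, ⟨hzL, h⟩, hVz⟩
  have hbelow : ∀ᶠ n in atTop, V (X (s (ψ n) + 1)) < c :=
    ((hV.tendsto _).comp (hX.tendsto_comp_add zero_le_one (hφ.continuous_apply hF zero_le_one)
      hs hXz)).eventually (eventually_lt_nhds (hVz ▸ hLyap z hFz 1 one_pos))
  obtain ⟨n, hn_below, hn_shadow⟩ :=
    (hbelow.and (hs.eventually (hX.eventually_lt_add hXb hV (sub_pos.2 hcb)))).exists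
  have hu_le : u (ψ n) ≤ s (ψ n) + 1 :=
    not_lt.1 fun h => (hafter (ψ n) _ ⟨by linarith, h.le⟩).not_gt hn_below
  have hshadow := hn_shadow (u (ψ n) - s (ψ n)) ⟨sub_nonneg.2 (hsu _).le, by linarith⟩
  rw [add_sub_cancel] at hshadow
  have hflow := hφ.apply_le_of_lyapunov hF hLyap (X (s (ψ n))) (sub_nonneg.2 (hsu (ψ n)).le)
  have hhigh : b < V (X (u (ψ n))) := hvu (ψ n)
  have hlevel : V (X (s (ψ n))) = c := hvs (ψ n)
  linarith

/-- if `L(X) ∩ Eq(F)` is countable and `V(L(X) ∩ Eq(F))` has empty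
interior, then the bounded APT `X` converges to a single equilibrium. -/
theorem apt_tendsto_of_countable {m : ℕ}
    (F : EuclideanSpace ℝ (Fin m) → EuclideanSpace ℝ (Fin m))
    (φ : ℝ → EuclideanSpace ℝ (Fin m) → EuclideanSpace ℝ (Fin m))
    (V : EuclideanSpace ℝ (Fin m) → ℝ) (X : ℝ → EuclideanSpace ℝ (Fin m))
    (hF : ContDiff ℝ 1 F) (hφ : IsFlowOf F φ)
    (hVc : ContDiff ℝ 1 V)
    (hLyap : ∀ x, F x ≠ 0 → ∀ t > (0:ℝ), V (φ t x) < V x)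
    (hX : IsAPT φ X) (hXc : Continuous X) (hXb : ∃ C : ℝ, ∀ t, ‖X t‖ ≤ C)
    (hcount : (limitSet X ∩ {x | F x = 0}).Countable)
    (hint : interior (V '' (limitSet X ∩ {x | F x = 0})) = ∅) :
    ∃ p : EuclideanSpace ℝ (Fin m), F p = 0 ∧ Tendsto X atTop (𝓝 p) := by
  obtain ⟨C, hXb⟩ := hXb
  have hV_le : ∀ p ∈ limitSet X, ∀ q ∈ limitSet X, V p ≤ V q := fun p hp q hq =>
    hX.lyapunov_le_of_mem_limitSet hF hφ hVc.continuous hLyap hXc hXb hint hp hq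
  have hEq : limitSet X ⊆ {x | F x = 0} := fun x hx => not_not.1 fun hFx =>
    (hLyap x hFx 1 one_pos).not_ge <| hV_le x hx _ <|
      hX.mapsTo_limitSet zero_le_one (hφ.continuous_apply hF zero_le_one) hx
  have hsingle : (limitSet X).Subsingleton :=
    (hcount.mono (subset_inter subset_rfl hEq)).isTotallyDisconnected _ le_rfl
      (isPreconnected_limitSet hXc hXb)
  obtain ⟨p, hp⟩ := limitSet_nonempty hXb
  exact ⟨p, hEq hp, tendsto_of_limitSet_subset_singleton hXb fun x hx => hsingle hx hp⟩
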